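/- Suppose x, y, θ, p : ℝ × [0,ℓ] → ℝ are smooth and satisfy the free planar Cosserat rod equations ρẍ + Kx⁗ = (p x′)′, ρÿ + Ky⁗ = (p y′)′, αθ̈ − βθ″ = 0, together with the inextensibility constraint (x′)² + (y′)² = 1, on ℝ × [0,ℓ]. Define the total energy E(t) = ∫₀^ℓ [ (ρ/2)(ẋ² + ẏ²) + (α/2)θ̇² + (K/2)((x″)² + (y″)²) + (β/2)(θ′)² ] ds and the flux F(t, s) = (p x′ − K x‴) ẋ + (p y′ − K y‴) ẏ + β θ′ θ̇ + K (x″ ẋ′ + y″ ẏ′). Then for all t₀ < t₁, E(t₁) − E(t₀) = ∫_{t₀}^{t₁} [F(t, ℓ) − F(t, 0)] dt. In particular, if for all t the free-end boundary conditions p x′ − K x‴ = p y′ − K y‴ = 0 and x″ = y″ = θ′ = 0 hold at s = 0 and s = ℓ, then E is constant. -/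

import Mathlib

open MeasureTheory

/-!
Differentiating the energy density in time, substituting the equations of motion and using the
symmetry of mixed partial derivatives, the energy density `e` and the flux `F` satisfy the local
conservation law `∂ₜe = ∂ₛF`; the constraint term `p (x′ẋ′ + y′ẏ′)` drops out because it is `p/2`
times the time derivative of the inextensibility constraint. Integrating over `[t₀, t₁] × [0, ℓ]`,
with Fubini and the fundamental theorem of calculus in each variable, gives the balance law, and
the free-end conditions make the flux vanish at both ends.
-/

/-- Partial derivative with respect to the first (time) variable. -/
noncomputable def pt (f : ℝ → ℝ → ℝ) : ℝ → ℝ → ℝ := fun t s => deriv (fun τ => f τ s) t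

/-- Partial derivative with respect to the second (arclength) variable. -/
noncomputable def ps (f : ℝ → ℝ → ℝ) : ℝ → ℝ → ℝ := fun t s => deriv (fun σ => f t σ) s

/-- Smoothness of a field of two real variables. -/
def Smooth2 (f : ℝ → ℝ → ℝ) : Prop := ContDiff ℝ (⊤ : ℕ∞) (fun p : ℝ × ℝ => f p.1 p.2)

/-- Energy density of the planar Cosserat rod. -/
noncomputable def Edens (ρ α β K : ℝ) (x y θ : ℝ → ℝ → ℝ) : ℝ → ℝ → ℝ := fun t s =>
  ρ / 2 * ((pt x t s) ^ 2 + (pt y t s) ^ 2) + α / 2 * (pt θ t s) ^ 2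
    + K / 2 * ((ps (ps x) t s) ^ 2 + (ps (ps y) t s) ^ 2) + β / 2 * (ps θ t s) ^ 2

/-- Total energy of the rod at time `t`. -/
noncomputable def Etot (ρ α β K ℓ : ℝ) (x y θ : ℝ → ℝ → ℝ) (t : ℝ) : ℝ :=
  ∫ s in (0 : ℝ)..ℓ, Edens ρ α β K x y θ t s

/-- Energy flux of the free planar Cosserat rod. -/
noncomputable def fluxF (β K : ℝ) (p x y θ : ℝ → ℝ → ℝ) (t s : ℝ) : ℝ :=
  (p t s * ps x t s - K * ps (ps (ps x)) t s) * pt x t s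
    + (p t s * ps y t s - K * ps (ps (ps y)) t s) * pt y t s
    + β * ps θ t s * pt θ t s
    + K * (ps (ps x) t s * ps (pt x) t s + ps (ps y) t s * ps (pt y) t s)

namespace Smooth2

variable {f g : ℝ → ℝ → ℝ}

theorem mul (hf : Smooth2 f) (hg : Smooth2 g) : Smooth2 (fun t s => f t s * g t s) :=
  ContDiff.mul hf hg

theorem continuous (hf : Smooth2 f) : Continuous (Function.uncurry f) :=
  ContDiff.continuous hf

theorem hasDerivAt_pt (hf : Smooth2 f) (t s : ℝ) :
    HasDerivAt (fun τ => f τ s) (pt f t s) t :=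
  ((hf.comp (contDiff_id.prodMk contDiff_const)).differentiable (by simp) t).hasDerivAt

theorem hasDerivAt_ps (hf : Smooth2 f) (t s : ℝ) :
    HasDerivAt (fun σ => f t σ) (ps f t s) s :=
  ((hf.comp (contDiff_const.prodMk contDiff_id)).differentiable (by simp) s).hasDerivAt

theorem pt_eq_fderiv (hf : Smooth2 f) (t s : ℝ) :
    pt f t s = fderiv ℝ (fun q : ℝ × ℝ => f q.1 q.2) (t, s) (1, 0) :=
  ((hf.differentiable (by simp) (t, s)).hasFDerivAt.comp_hasDerivAt
    (l := fun q : ℝ × ℝ => f q.1 q.2) t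
    ((hasDerivAt_id' t).prodMk (hasDerivAt_const t s))).deriv

theorem ps_eq_fderiv (hf : Smooth2 f) (t s : ℝ) :
    ps f t s = fderiv ℝ (fun q : ℝ × ℝ => f q.1 q.2) (t, s) (0, 1) :=
  ((hf.differentiable (by simp) (t, s)).hasFDerivAt.comp_hasDerivAt
    (l := fun q : ℝ × ℝ => f q.1 q.2) s
    ((hasDerivAt_const s t).prodMk (hasDerivAt_id' s))).deriv

theorem dt (hf : Smooth2 f) : Smooth2 (pt f) := by
  simpa only [Smooth2, hf.pt_eq_fderiv] using
    (hf.fderiv_right (m := (⊤ : ℕ∞)) (by simp)).clm_apply contDiff_const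

theorem ds (hf : Smooth2 f) : Smooth2 (ps f) := by
  simpa only [Smooth2, hf.ps_eq_fderiv] using
    (hf.fderiv_right (m := (⊤ : ℕ∞)) (by simp)).clm_apply contDiff_const

theorem pt_ps_comm (hf : Smooth2 f) : pt (ps f) = ps (pt f) := by
  ext t s
  have hsymm := (hf.contDiffAt (x := (t, s))).isSymmSndFDerivAt <| by
    simp only [minSmoothness_of_isRCLikeNormedField]
    exact WithTop.coe_le_coe.mpr le_top
  have hF := hf.fderiv_right (m := (⊤ : ℕ∞)) (by simp)
  rw [hf.ds.pt_eq_fderiv, hf.dt.ps_eq_fderiv]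
  simp only [hf.ps_eq_fderiv, hf.pt_eq_fderiv]
  rw [fderiv_clm_apply (hF.differentiable (by simp) _) (differentiableAt_const _),
    fderiv_clm_apply (hF.differentiable (by simp) _) (differentiableAt_const _)]
  simp [hsymm (1, 0) (0, 1)]

end Smooth2

theorem integral_sub_integral_eq_integral_flux {e f : ℝ → ℝ → ℝ} (he : Smooth2 e)
    (hf : Smooth2 f) {a b : ℝ} (hef : ∀ t, ∀ s ∈ Set.uIcc a b, pt e t s = ps f t s)
    (t₀ t₁ : ℝ) :
    (∫ s in a..b, e t₁ s) - ∫ s in a..b, e t₀ s = ∫ t in t₀..t₁, (f t b - f t a) := by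
  have hint : IntegrableOn (Function.uncurry fun s t => pt e t s)
      (Set.uIoc a b ×ˢ Set.uIoc t₀ t₁) :=
    (he.dt.continuous.comp continuous_swap).continuousOn.integrableOn_compact
      (isCompact_uIcc.prod isCompact_uIcc) |>.mono_set
      (Set.prod_mono Set.uIoc_subset_uIcc Set.uIoc_subset_uIcc)
  calc (∫ s in a..b, e t₁ s) - ∫ s in a..b, e t₀ s
      = ∫ s in a..b, (e t₁ s - e t₀ s) :=
        (intervalIntegral.integral_sub
          ((he.continuous.uncurry_left t₁).intervalIntegrable a b)
          ((he.continuous.uncurry_left t₀).intervalIntegrable a b)).symm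
    _ = ∫ s in a..b, ∫ t in t₀..t₁, pt e t s :=
        intervalIntegral.integral_congr fun s _ =>
          (intervalIntegral.integral_eq_sub_of_hasDerivAt (fun t _ => he.hasDerivAt_pt t s)
            ((he.dt.continuous.uncurry_right s).intervalIntegrable t₀ t₁)).symm
    _ = ∫ t in t₀..t₁, ∫ s in a..b, pt e t s := intervalIntegral_intervalIntegral_swap hint
    _ = ∫ t in t₀..t₁, ∫ s in a..b, ps f t s :=
        intervalIntegral.integral_congr fun t _ =>
          intervalIntegral.integral_congr fun s hs => hef t s hs
    _ = ∫ t in t₀..t₁, (f t b - f t a) :=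
        intervalIntegral.integral_congr fun t _ =>
          intervalIntegral.integral_eq_sub_of_hasDerivAt (fun s _ => hf.hasDerivAt_ps t s)
            ((hf.ds.continuous.uncurry_left t).intervalIntegrable a b)

section RodFields

variable {ρ α β K : ℝ} {p x y θ : ℝ → ℝ → ℝ}

theorem smooth2_Edens (hx : Smooth2 x) (hy : Smooth2 y) (hθ : Smooth2 θ) :
    Smooth2 (Edens ρ α β K x y θ) := by
  have := hx.dt; have := hy.dt; have := hθ.dt
  have := hx.ds.ds; have := hy.ds.ds; have := hθ.ds
  unfold Smooth2 Edens at *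
  fun_prop

theorem smooth2_fluxF (hp : Smooth2 p) (hx : Smooth2 x) (hy : Smooth2 y) (hθ : Smooth2 θ) :
    Smooth2 (fluxF β K p x y θ) := by
  have := hx.ds; have := hy.ds; have := hx.ds.ds.ds; have := hy.ds.ds.ds
  have := hx.dt; have := hy.dt; have := hθ.ds; have := hθ.dt
  have := hx.ds.ds; have := hy.ds.ds; have := hx.dt.ds; have := hy.dt.ds
  unfold Smooth2 fluxF at *
  fun_prop

theorem hasDerivAt_Edens (hx : Smooth2 x) (hy : Smooth2 y) (hθ : Smooth2 θ) (t s : ℝ) :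
    HasDerivAt (fun τ => Edens ρ α β K x y θ τ s)
      (ρ * (pt x t s * pt (pt x) t s + pt y t s * pt (pt y) t s)
        + α * (pt θ t s * pt (pt θ) t s)
        + K * (ps (ps x) t s * ps (ps (pt x)) t s + ps (ps y) t s * ps (ps (pt y)) t s)
        + β * (ps θ t s * ps (pt θ) t s)) t := by
  have hkin := (((hx.dt.hasDerivAt_pt t s).pow 2).add ((hy.dt.hasDerivAt_pt t s).pow 2)).const_mul
    (ρ / 2)
  have hrot := ((hθ.dt.hasDerivAt_pt t s).pow 2).const_mul (α / 2)
  have hbend := (((hx.ds.ds.hasDerivAt_pt t s).pow 2).add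
    ((hy.ds.ds.hasDerivAt_pt t s).pow 2)).const_mul (K / 2)
  have hshear := ((hθ.ds.hasDerivAt_pt t s).pow 2).const_mul (β / 2)
  have h := ((hkin.add hrot).add hbend).add hshear
  rw [hx.ds.pt_ps_comm, hy.ds.pt_ps_comm, hx.pt_ps_comm, hy.pt_ps_comm, hθ.pt_ps_comm] at h
  exact h.congr_deriv (by push_cast; ring)

theorem hasDerivAt_fluxF (hp : Smooth2 p) (hx : Smooth2 x) (hy : Smooth2 y) (hθ : Smooth2 θ)
    (t s : ℝ) :
    HasDerivAt (fun σ => fluxF β K p x y θ t σ)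
      ((ps (fun t s => p t s * ps x t s) t s - K * ps (ps (ps (ps x))) t s) * pt x t s
        + (p t s * ps x t s - K * ps (ps (ps x)) t s) * ps (pt x) t s
        + (ps (fun t s => p t s * ps y t s) t s - K * ps (ps (ps (ps y))) t s) * pt y t s
        + (p t s * ps y t s - K * ps (ps (ps y)) t s) * ps (pt y) t s
        + β * (ps (ps θ) t s * pt θ t s + ps θ t s * ps (pt θ) t s)
        + K * (ps (ps (ps x)) t s * ps (pt x) t s + ps (ps x) t s * ps (ps (pt x)) t s
          + ps (ps (ps y)) t s * ps (pt y) t s + ps (ps y) t s * ps (ps (pt y)) t s)) s := by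
  have hxT := (((hp.mul hx.ds).hasDerivAt_ps t s).sub
    ((hx.ds.ds.ds.hasDerivAt_ps t s).const_mul K)).mul (hx.dt.hasDerivAt_ps t s)
  have hyT := (((hp.mul hy.ds).hasDerivAt_ps t s).sub
    ((hy.ds.ds.ds.hasDerivAt_ps t s).const_mul K)).mul (hy.dt.hasDerivAt_ps t s)
  have hθT := ((hθ.ds.hasDerivAt_ps t s).const_mul β).mul (hθ.dt.hasDerivAt_ps t s)
  have hbend := (((hx.ds.ds.hasDerivAt_ps t s).mul (hx.dt.ds.hasDerivAt_ps t s)).add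
    ((hy.ds.ds.hasDerivAt_ps t s).mul (hy.dt.ds.hasDerivAt_ps t s))).const_mul K
  exact (((hxT.add hyT).add hθT).add hbend).congr_deriv
    (by simp only [Pi.sub_apply]; ring)

theorem inner_pt_eq_zero_of_sq_add_sq_eq {f g : ℝ → ℝ → ℝ} (hf : Smooth2 f) (hg : Smooth2 g)
    {s c : ℝ} (h : ∀ τ, f τ s ^ 2 + g τ s ^ 2 = c) (t : ℝ) :
    f t s * pt f t s + g t s * pt g t s = 0 := by
  have hconst : HasDerivAt (fun τ => f τ s ^ 2 + g τ s ^ 2) 0 t := by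
    simp only [h]
    exact hasDerivAt_const t c
  have := (((hf.hasDerivAt_pt t s).pow 2).add ((hg.hasDerivAt_pt t s).pow 2)).unique hconst
  push_cast at this
  linarith

theorem pt_Edens_eq_ps_fluxF (hp : Smooth2 p) (hx : Smooth2 x) (hy : Smooth2 y) (hθ : Smooth2 θ)
    {t s : ℝ}
    (heqx : ρ * pt (pt x) t s + K * ps (ps (ps (ps x))) t s
      = ps (fun t' s' => p t' s' * ps x t' s') t s)
    (heqy : ρ * pt (pt y) t s + K * ps (ps (ps (ps y))) t s
      = ps (fun t' s' => p t' s' * ps y t' s') t s)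
    (heqθ : α * pt (pt θ) t s - β * ps (ps θ) t s = 0)
    (hinext : ps x t s * ps (pt x) t s + ps y t s * ps (pt y) t s = 0) :
    pt (Edens ρ α β K x y θ) t s = ps (fluxF β K p x y θ) t s := by
  have hE : pt (Edens ρ α β K x y θ) t s = _ := (hasDerivAt_Edens hx hy hθ t s).deriv
  have hF : ps (fluxF β K p x y θ) t s = _ := (hasDerivAt_fluxF hp hx hy hθ t s).deriv
  rw [hE, hF]
  linear_combination pt x t s * heqx + pt y t s * heqy + pt θ t s * heqθ - p t s * hinext

theorem fluxF_eq_zero_of_free_end {t s : ℝ}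
    (hforce_x : p t s * ps x t s - K * ps (ps (ps x)) t s = 0)
    (hforce_y : p t s * ps y t s - K * ps (ps (ps y)) t s = 0)
    (hmoment_x : ps (ps x) t s = 0) (hmoment_y : ps (ps y) t s = 0) (hθ : ps θ t s = 0) :
    fluxF β K p x y θ t s = 0 := by
  simp [fluxF, hforce_x, hforce_y, hmoment_x, hmoment_y, hθ]

end RodFields

theorem energy_balance_free_rod_general
    (ρ α β K ℓ : ℝ) (hℓ : 0 < ℓ)
    (x y θ p : ℝ → ℝ → ℝ)
    (hx : Smooth2 x) (hy : Smooth2 y) (hθ : Smooth2 θ) (hp : Smooth2 p)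
    (heqx : ∀ t : ℝ, ∀ s ∈ Set.Icc (0 : ℝ) ℓ,
      ρ * pt (pt x) t s + K * ps (ps (ps (ps x))) t s
        = ps (fun t' s' => p t' s' * ps x t' s') t s)
    (heqy : ∀ t : ℝ, ∀ s ∈ Set.Icc (0 : ℝ) ℓ,
      ρ * pt (pt y) t s + K * ps (ps (ps (ps y))) t s
        = ps (fun t' s' => p t' s' * ps y t' s') t s)
    (heqθ : ∀ t : ℝ, ∀ s ∈ Set.Icc (0 : ℝ) ℓ,
      α * pt (pt θ) t s - β * ps (ps θ) t s = 0)
    (hinext : ∀ t : ℝ, ∀ s ∈ Set.Icc (0 : ℝ) ℓ, (ps x t s) ^ 2 + (ps y t s) ^ 2 = 1) :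
    (∀ t₀ t₁ : ℝ, t₀ < t₁ →
      Etot ρ α β K ℓ x y θ t₁ - Etot ρ α β K ℓ x y θ t₀
        = ∫ t in t₀..t₁, (fluxF β K p x y θ t ℓ - fluxF β K p x y θ t 0)) ∧
    ((∀ t : ℝ, ∀ s : ℝ, s = 0 ∨ s = ℓ →
        p t s * ps x t s - K * ps (ps (ps x)) t s = 0 ∧
        p t s * ps y t s - K * ps (ps (ps y)) t s = 0 ∧
        ps (ps x) t s = 0 ∧ ps (ps y) t s = 0 ∧ ps θ t s = 0) →
      ∀ t₁ t₂ : ℝ, Etot ρ α β K ℓ x y θ t₁ = Etot ρ α β K ℓ x y θ t₂) := by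
  have hbalance : ∀ t₀ t₁ : ℝ, Etot ρ α β K ℓ x y θ t₁ - Etot ρ α β K ℓ x y θ t₀
      = ∫ t in t₀..t₁, (fluxF β K p x y θ t ℓ - fluxF β K p x y θ t 0) := by
    refine integral_sub_integral_eq_integral_flux (smooth2_Edens hx hy hθ)
      (smooth2_fluxF hp hx hy hθ) fun t s hs => ?_
    rw [Set.uIcc_of_le hℓ.le] at hs
    have hinext_dt : ps x t s * ps (pt x) t s + ps y t s * ps (pt y) t s = 0 := by
      rw [← hx.pt_ps_comm, ← hy.pt_ps_comm]
      exact inner_pt_eq_zero_of_sq_add_sq_eq hx.ds hy.ds (fun τ => hinext τ s hs) t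
    exact pt_Edens_eq_ps_fluxF hp hx hy hθ (heqx t s hs) (heqy t s hs) (heqθ t s hs) hinext_dt
  refine ⟨fun t₀ t₁ _ => hbalance t₀ t₁, fun hfree t₁ t₂ => ?_⟩
  have hflux : ∀ t, fluxF β K p x y θ t ℓ - fluxF β K p x y θ t 0 = 0 := fun t => by
    obtain ⟨hℓx, hℓy, hℓx', hℓy', hℓθ⟩ := hfree t ℓ (.inr rfl)
    obtain ⟨h0x, h0y, h0x', h0y', h0θ⟩ := hfree t 0 (.inl rfl)
    rw [fluxF_eq_zero_of_free_end hℓx hℓy hℓx' hℓy' hℓθ,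
      fluxF_eq_zero_of_free_end h0x h0y h0x' h0y' h0θ, sub_zero]
  simpa [hflux, sub_eq_zero] using hbalance t₂ t₁

/-- integral energy balance for the free planar Cosserat rod, and energy
conservation under free-end boundary conditions. -/
theorem energy_balance_free_rod
    (ρ α β K ℓ : ℝ) (hρ : 0 < ρ) (hα : 0 < α) (hβ : 0 < β) (hK : 0 < K) (hℓ : 0 < ℓ)
    (x y θ p : ℝ → ℝ → ℝ)
    (hx : Smooth2 x) (hy : Smooth2 y) (hθ : Smooth2 θ) (hp : Smooth2 p)
    (heqx : ∀ t : ℝ, ∀ s ∈ Set.Icc (0 : ℝ) ℓ,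
      ρ * pt (pt x) t s + K * ps (ps (ps (ps x))) t s
        = ps (fun t' s' => p t' s' * ps x t' s') t s)
    (heqy : ∀ t : ℝ, ∀ s ∈ Set.Icc (0 : ℝ) ℓ,
      ρ * pt (pt y) t s + K * ps (ps (ps (ps y))) t s
        = ps (fun t' s' => p t' s' * ps y t' s') t s)
    (heqθ : ∀ t : ℝ, ∀ s ∈ Set.Icc (0 : ℝ) ℓ,
      α * pt (pt θ) t s - β * ps (ps θ) t s = 0)
    (hinext : ∀ t : ℝ, ∀ s ∈ Set.Icc (0 : ℝ) ℓ, (ps x t s) ^ 2 + (ps y t s) ^ 2 = 1) :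
    (∀ t₀ t₁ : ℝ, t₀ < t₁ →
      Etot ρ α β K ℓ x y θ t₁ - Etot ρ α β K ℓ x y θ t₀
        = ∫ t in t₀..t₁, (fluxF β K p x y θ t ℓ - fluxF β K p x y θ t 0)) ∧
    ((∀ t : ℝ, ∀ s : ℝ, s = 0 ∨ s = ℓ →
        p t s * ps x t s - K * ps (ps (ps x)) t s = 0 ∧
        p t s * ps y t s - K * ps (ps (ps y)) t s = 0 ∧
        ps (ps x) t s = 0 ∧ ps (ps y) t s = 0 ∧ ps θ t s = 0) →
      ∀ t₁ t₂ : ℝ, Etot ρ α β K ℓ x y θ t₁ = Etot ρ α β K ℓ x y θ t₂) :=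
  energy_balance_free_rod_general ρ α β K ℓ hℓ x y θ p hx hy hθ hp heqx heqy heqθ hinext
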